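/- Let f : ℝ² → ℝ be C² and λ : ℝ² → ℝ be C¹, and let v = (−λ ∂_y f, λ ∂_x f). Suppose there exists a differentiable function h : ℝ → ℝ such that λ(x,y) · ( ∂_x(λ ∂_x f) + ∂_y(λ ∂_y f) )(x,y) = h'(f(x,y)) for all (x,y) ∈ ℝ². Then the Dainelli force field F = ∇(½‖v‖²) − λ ( ∂_x(λ ∂_x f) + ∂_y(λ ∂_y f) ) ∇f is potential: F = ∇U with U = ½‖v‖² − h∘f, and consequently every solution of (ẋ, ẏ) = v(x, y) satisfies (ẍ, ÿ) = ∇U(x(t), y(t)) and moves along a level curve f = c. -/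

import Mathlib

/-!
Write `g = λ ∇f`, so that `v = J g` is `g` turned by a quarter turn. For every differentiable
planar field `g`, the derivative of `J g` along its own flow is the identity
`D(Jg) (Jg) = ∇(½‖g‖²) − (div g) g`, whose right-hand side is the Dainelli field since
`‖g‖ = ‖v‖`. The hypothesis `λ div g = h'(f)` turns the last term into `∇(h ∘ f)`, so the field is
`∇U`. Finally `f` is a first integral because `v ⟂ ∇f`.
-/

open Real Set

noncomputable section

/-- Partial derivative in the `k`-th coordinate direction on ℝ². -/
def pd (k : Fin 2) (f : (Fin 2 → ℝ) → ℝ) (x : Fin 2 → ℝ) : ℝ :=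
  fderiv ℝ f x (Pi.single k 1)

/-- Gradient on ℝ². -/
def grad (f : (Fin 2 → ℝ) → ℝ) (x : Fin 2 → ℝ) : Fin 2 → ℝ := fun k => pd k f x

/-- Squared Euclidean norm on ℝ². -/
def nsq (a : Fin 2 → ℝ) : ℝ := ∑ i, a i ^ 2

/-- Jacobian bracket `{F, G} = ∂ₓF ∂ᵧG − ∂ᵧF ∂ₓG`. -/
def br (F g : (Fin 2 → ℝ) → ℝ) (x : Fin 2 → ℝ) : ℝ :=
  pd 0 F x * pd 1 g x - pd 1 F x * pd 0 g x

theorem comp_eq_of_fderiv_apply_eq_zero {E G : Type*} [NormedAddCommGroup E]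
    [NormedSpace ℝ E] [NormedAddCommGroup G] [NormedSpace ℝ G] {F : E → G} {w : E → E}
    {x : ℝ → E} {a b t s : ℝ} (hF : Differentiable ℝ F) (hFw : ∀ p, fderiv ℝ F p (w p) = 0)
    (hx : ∀ t ∈ Ioo a b, HasDerivAt x (w (x t)) t) (ht : t ∈ Ioo a b) (hs : s ∈ Ioo a b) :
    F (x t) = F (x s) := by
  have hderiv : ∀ r ∈ Ioo a b, HasDerivAt (fun u => F (x u)) 0 r := fun r hr => by
    simpa only [Function.comp_def, hFw] using (hF (x r)).hasFDerivAt.comp_hasDerivAt r (hx r hr)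
  exact isOpen_Ioo.is_const_of_deriv_eq_zero isPreconnected_Ioo
    (fun r hr => (hderiv r hr).differentiableAt.differentiableWithinAt)
    (fun r hr => (hderiv r hr).deriv) ht hs

theorem fderiv_apply_eq_pd (F : (Fin 2 → ℝ) → ℝ) (p w : Fin 2 → ℝ) :
    fderiv ℝ F p w = w 0 * pd 0 F p + w 1 * pd 1 F p := by
  conv_lhs => rw [show w = w 0 • Pi.single 0 1 + w 1 • Pi.single 1 1 by
    funext i; fin_cases i <;> simp]
  simp [pd]

section PartialDerivative

variable {F G : (Fin 2 → ℝ) → ℝ} {p : Fin 2 → ℝ} (k : Fin 2)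

theorem pd_add (hF : DifferentiableAt ℝ F p) (hG : DifferentiableAt ℝ G p) :
    pd k (fun q => F q + G q) p = pd k F p + pd k G p := by
  simp [pd, fderiv_fun_add hF hG]

theorem pd_sub (hF : DifferentiableAt ℝ F p) (hG : DifferentiableAt ℝ G p) :
    pd k (fun q => F q - G q) p = pd k F p - pd k G p := by
  simp [pd, fderiv_fun_sub hF hG]

theorem pd_mul (hF : DifferentiableAt ℝ F p) (hG : DifferentiableAt ℝ G p) :
    pd k (fun q => F q * G q) p = F p * pd k G p + G p * pd k F p := by
  simp [pd, fderiv_fun_mul hF hG]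

theorem pd_const_mul (hF : DifferentiableAt ℝ F p) (c : ℝ) :
    pd k (fun q => c * F q) p = c * pd k F p := by
  simp [pd, fderiv_const_mul hF]

theorem pd_comp {h : ℝ → ℝ} (hh : DifferentiableAt ℝ h (F p)) (hF : DifferentiableAt ℝ F p) :
    pd k (fun q => h (F q)) p = deriv h (F p) * pd k F p := by
  show fderiv ℝ (h ∘ F) p _ = _
  simp [pd, (hh.hasDerivAt.comp_hasFDerivAt p hF.hasFDerivAt).fderiv]

end PartialDerivative

theorem contDiff_pd {f : (Fin 2 → ℝ) → ℝ} {n : WithTop ℕ∞} (hf : ContDiff ℝ (n + 1) f)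
    (k : Fin 2) : ContDiff ℝ n (pd k f) :=
  (hf.fderiv_right le_rfl).clm_apply contDiff_const

section Rotation

variable {g : Fin 2 → (Fin 2 → ℝ) → ℝ}

theorem half_nsq_rotate_eq (a b : ℝ) : 1 / 2 * nsq ![-a, b] = 1 / 2 * (a * a + b * b) := by
  simp only [nsq, Fin.sum_univ_two, Matrix.cons_val_zero, Matrix.cons_val_one,
    Matrix.cons_val_fin_one]
  ring

theorem differentiableAt_half_nsq_rotate {p : Fin 2 → ℝ}
    (hg : ∀ i, DifferentiableAt ℝ (g i) p) :
    DifferentiableAt ℝ (fun q => 1 / 2 * nsq ![-g 1 q, g 0 q]) p := by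
  have := hg 0
  have := hg 1
  simp only [half_nsq_rotate_eq]
  fun_prop

theorem pd_half_nsq_rotate {p : Fin 2 → ℝ} (hg : ∀ i, DifferentiableAt ℝ (g i) p) (k : Fin 2) :
    pd k (fun q => 1 / 2 * nsq ![-g 1 q, g 0 q]) p
      = g 0 p * pd k (g 0) p + g 1 p * pd k (g 1) p := by
  simp only [half_nsq_rotate_eq]
  rw [pd_const_mul k (by fun_prop), pd_add k (by fun_prop) (by fun_prop), pd_mul k (hg 1) (hg 1),
    pd_mul k (hg 0) (hg 0)]
  ring

theorem hasDerivAt_rotate_comp {x : ℝ → Fin 2 → ℝ} {t : ℝ}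
    (hg : ∀ i, DifferentiableAt ℝ (g i) (x t)) (hx : HasDerivAt x ![-g 1 (x t), g 0 (x t)] t) :
    HasDerivAt (fun u => ![-g 1 (x u), g 0 (x u)])
      (fun k => g 0 (x t) * pd k (g 0) (x t) + g 1 (x t) * pd k (g 1) (x t)
        - (pd 0 (g 0) (x t) + pd 1 (g 1) (x t)) * g k (x t)) t := by
  rw [hasDerivAt_pi, Fin.forall_fin_two]
  constructor
  · refine ((hg 1).hasFDerivAt.comp_hasDerivAt t hx).neg.congr_deriv ?_
    simp only [fderiv_apply_eq_pd, Matrix.cons_val_zero, Matrix.cons_val_one,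
      Matrix.cons_val_fin_one]
    ring
  · refine ((hg 0).hasFDerivAt.comp_hasDerivAt t hx).congr_deriv ?_
    simp only [fderiv_apply_eq_pd, Matrix.cons_val_zero, Matrix.cons_val_one,
      Matrix.cons_val_fin_one]
    ring

end Rotation

/-- Suslov's inverse problem for N = 2: if `λ(∂ₓ(λ∂ₓf) + ∂ᵧ(λ∂ᵧf)) = h'(f)` then the
Dainelli force field is potential, `F = ∇U` with `U = ½‖v‖² − h∘f`, and every solution
of `(ẋ,ẏ) = v(x,y)` satisfies `(ẍ,ÿ) = ∇U` and moves along a level curve of `f`. -/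
theorem dainelli_potential
    (f lam : (Fin 2 → ℝ) → ℝ) (hf : ContDiff ℝ 2 f) (hlam : ContDiff ℝ 1 lam)
    (v : (Fin 2 → ℝ) → (Fin 2 → ℝ))
    (hv : ∀ p, v p = ![-(lam p * pd 1 f p), lam p * pd 0 f p])
    (h : ℝ → ℝ) (hh : Differentiable ℝ h)
    (hcomp : ∀ p, lam p * (pd 0 (fun q => lam q * pd 0 f q) p
      + pd 1 (fun q => lam q * pd 1 f q) p) = deriv h (f p))
    (U : (Fin 2 → ℝ) → ℝ)
    (hU : ∀ p, U p = (1 / 2) * nsq (v p) - h (f p)) :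
    -- the Dainelli force field is the gradient of U
    (∀ p, (fun k => grad (fun q => (1 / 2) * nsq (v q)) p k
        - lam p * (pd 0 (fun q => lam q * pd 0 f q) p
          + pd 1 (fun q => lam q * pd 1 f q) p) * pd k f p) = grad U p) ∧
    -- and every solution of (ẋ,ẏ) = v(x,y) satisfies (ẍ,ÿ) = ∇U and stays on f = c
    (∀ t₁ t₂ : ℝ, ∀ x : ℝ → (Fin 2 → ℝ),
      (∀ t ∈ Ioo t₁ t₂, HasDerivAt x (v (x t)) t) →
      ∀ t ∈ Ioo t₁ t₂,
        HasDerivAt (fun u => v (x u)) (grad U (x t)) t ∧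
        ∀ s ∈ Ioo t₁ t₂, f (x t) = f (x s)) := by
  set g : Fin 2 → (Fin 2 → ℝ) → ℝ := fun k q => lam q * pd k f q
  have hfd : Differentiable ℝ f := hf.differentiable two_ne_zero
  have hgd (k : Fin 2) : Differentiable ℝ (g k) :=
    (hlam.mul (contDiff_pd hf k)).differentiable one_ne_zero
  have hv' : v = fun q => ![-g 1 q, g 0 q] := funext hv
  have hU' : U = fun q => 1 / 2 * nsq ![-g 1 q, g 0 q] - h (f q) := funext fun q => by
    rw [hU, hv']
  have hgradU (p : Fin 2 → ℝ) : grad U p = fun k => g 0 p * pd k (g 0) p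
      + g 1 p * pd k (g 1) p - (pd 0 (g 0) p + pd 1 (g 1) p) * g k p := by
    funext k
    rw [grad, hU', pd_sub k (differentiableAt_half_nsq_rotate (fun i => hgd i p)) (by fun_prop),
      pd_half_nsq_rotate (fun i => hgd i p), pd_comp k (hh _) (hfd p), ← hcomp]
    ring
  refine ⟨fun p => ?_, fun t₁ t₂ x hx t ht => ⟨?_, fun s hs => ?_⟩⟩
  · rw [hgradU, hv']
    funext k
    simp only [grad, pd_half_nsq_rotate (fun i => hgd i p)]
    ring
  · rw [hv', hgradU]
    exact hasDerivAt_rotate_comp (fun i => hgd i _) (hv (x t) ▸ hx t ht)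
  · refine comp_eq_of_fderiv_apply_eq_zero hfd (fun p => ?_) hx ht hs
    simp only [fderiv_apply_eq_pd, hv, Matrix.cons_val_zero, Matrix.cons_val_one,
      Matrix.cons_val_fin_one]
    ring
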